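/- Let E = E(I₀,{n_k},{c_k},{ξ_{k,l}}) be a homogeneous perfect set satisfying the gap-comparability condition with constant χ ≥ 1, {H_m}_{m≥0} the sequence from Lemma 4.1's construction, and {a_k} a subsequence of {m_k − 1} with lim_{k→∞} (l(H_{a_k}))^{1/a_k} = 1. Then for every ε ∈ (0,1), lim_{k→∞} #S_ε(a_k)/a_k = 1, where S_ε(m) = {j : 1 ≤ j ≤ m, γ(j) ≤ ε} and # denotes cardinality. -/

import Mathlib

open Set Filter Metric

noncomputable section

/-- A word `σ = σ₁⋯σ_k` is valid for the branching sequence `n` if `1 ≤ σ_j ≤ n j`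
for every `1 ≤ j ≤ k`.  Words are represented as lists (read with 1-based indices). -/
def ValidWord (n : ℕ → ℕ) (σ : List ℕ) : Prop :=
  ∀ j, j < σ.length → 1 ≤ σ.getD j 0 ∧ σ.getD j 0 ≤ n (j + 1)

/-- The conditions (1)–(4) of Definition 2.1: the family of closed intervals
`I_σ = [a σ, b σ]` (for `σ ∈ D`) has homogeneous perfect structure with parameters
`n`, `c`, `ξ`. -/
structure HPStruct (n : ℕ → ℕ) (c : ℕ → ℝ) (ξ : ℕ → ℕ → ℝ) (a b : List ℕ → ℝ) : Prop where
  /-- each `I_{σ*j}` is a subinterval of `I_σ` -/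
  sub : ∀ σ : List ℕ, ValidWord n σ → ∀ j, 1 ≤ j → j ≤ n (σ.length + 1) →
    Set.Icc (a (σ ++ [j])) (b (σ ++ [j])) ⊆ Set.Icc (a σ) (b σ)
  /-- `min I_{σ*(l+1)} ≥ max I_{σ*l}` -/
  ord : ∀ σ : List ℕ, ValidWord n σ → ∀ l, 1 ≤ l → l + 1 ≤ n (σ.length + 1) →
    b (σ ++ [l]) ≤ a (σ ++ [l + 1])
  /-- `|I_{σ*j}| / |I_σ| = c_k` -/
  ratio : ∀ σ : List ℕ, ValidWord n σ → ∀ j, 1 ≤ j → j ≤ n (σ.length + 1) →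
    b (σ ++ [j]) - a (σ ++ [j]) = c (σ.length + 1) * (b σ - a σ)
  /-- `min I_{σ*1} - min I_σ = ξ_{k,0}` -/
  gap0 : ∀ σ : List ℕ, ValidWord n σ → a (σ ++ [1]) - a σ = ξ (σ.length + 1) 0
  /-- `min I_{σ*(l+1)} - max I_{σ*l} = ξ_{k,l}` -/
  gapl : ∀ σ : List ℕ, ValidWord n σ → ∀ l, 1 ≤ l → l + 1 ≤ n (σ.length + 1) →
    a (σ ++ [l + 1]) - b (σ ++ [l]) = ξ (σ.length + 1) l
  /-- `max I_σ - max I_{σ*n_k} = ξ_{k,n_k}` -/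
  gapn : ∀ σ : List ℕ, ValidWord n σ → b σ - b (σ ++ [n (σ.length + 1)]) =
    ξ (σ.length + 1) (n (σ.length + 1))

/-- A homogeneous perfect set datum `E(I₀, {n_k}, {c_k}, {ξ_{k,l}})` of Definition 2.1:
a nondegenerate initial closed interval `I₀ = [a ∅, b ∅]`, integers `n_k ≥ 2`,
ratios `c_k > 0` with `n_k c_k < 1`, nonnegative gaps `ξ_{k,l}` (`0 ≤ l ≤ n_k`), and a
family of closed intervals `I_σ = [a σ, b σ]` with homogeneous perfect structure. -/
structure HPS where
  n : ℕ → ℕ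
  c : ℕ → ℝ
  ξ : ℕ → ℕ → ℝ
  a : List ℕ → ℝ
  b : List ℕ → ℝ
  hn : ∀ k, 1 ≤ k → 2 ≤ n k
  hc : ∀ k, 1 ≤ k → 0 < c k
  hnc : ∀ k, 1 ≤ k → (n k : ℝ) * c k < 1
  hξ : ∀ k, 1 ≤ k → ∀ l, l ≤ n k → 0 ≤ ξ k l
  hab : a [] < b []
  struct : HPStruct n c ξ a b

namespace HPS

variable (S : HPS)

/-- `E_k`, the union of the `k`-order basic intervals. -/
def Ek (k : ℕ) : Set ℝ :=
  ⋃ σ ∈ {σ : List ℕ | σ.length = k ∧ ValidWord S.n σ}, Set.Icc (S.a σ) (S.b σ)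

/-- The homogeneous perfect set `E = ⋂_k E_k`. -/
def E : Set ℝ := ⋂ k, S.Ek k

/-- Left endpoint of the trimmed interval `I_σ*` (for `σ ∈ D_k`):
`min I_σ* - min I_σ = ξ_{k+1,0}`. -/
def aStar (σ : List ℕ) : ℝ := S.a σ + S.ξ (σ.length + 1) 0

/-- Right endpoint of the trimmed interval `I_σ*`:
`max I_σ - max I_σ* = ξ_{k+1,n_{k+1}}`. -/
def bStar (σ : List ℕ) : ℝ := S.b σ - S.ξ (σ.length + 1) (S.n (σ.length + 1))

/-- `E_k* = ⋃_{σ ∈ D_k} I_σ*`. -/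
def EkStar (k : ℕ) : Set ℝ :=
  ⋃ σ ∈ {σ : List ℕ | σ.length = k ∧ ValidWord S.n σ}, Set.Icc (S.aStar σ) (S.bStar σ)

/-- `δ_k = |I_σ*|` for `σ ∈ D_k` (this common value is computed on the word `1⋯1`). -/
def delta (k : ℕ) : ℝ :=
  S.bStar (List.replicate k 1) - S.aStar (List.replicate k 1)

/-- `c_k* = δ_k / δ_{k-1}`. -/
def cStar (k : ℕ) : ℝ := S.delta k / S.delta (k - 1)

/-- `δ_k* = δ₀ c₁* ⋯ c_k*`. -/
def deltaStar (k : ℕ) : ℝ := S.delta 0 * ∏ j ∈ Finset.Icc 1 k, S.cStar j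

/-- `N_k* = n₁* ⋯ n_k* = n₁ ⋯ n_k`. -/
def Nstar (k : ℕ) : ℕ := ∏ j ∈ Finset.Icc 1 k, S.n j

/-- The reconstructed gap parameters: `ξ*_{k,l} = ξ_{k,l} + ξ_{k+1,0} + ξ_{k+1,n_{k+1}}`
for `1 ≤ l ≤ n_k - 1`, `ξ*_{k,0} = ξ_{k+1,0}`, `ξ*_{k,n_k} = ξ_{k+1,n_{k+1}}`. -/
def xiStar (k l : ℕ) : ℝ :=
  if l = 0 then S.ξ (k + 1) 0
  else if l = S.n k then S.ξ (k + 1) (S.n (k + 1))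
  else S.ξ k l + S.ξ (k + 1) 0 + S.ξ (k + 1) (S.n (k + 1))

/-- `α̲*_k = min_{1 ≤ l ≤ n_k - 1} ξ*_{k,l}`. -/
def alphaLo (k : ℕ) : ℝ := sInf ((fun l => S.xiStar k l) '' Set.Icc 1 (S.n k - 1))

/-- `α̅*_k = max_{1 ≤ l ≤ n_k - 1} ξ*_{k,l}`. -/
def alphaHi (k : ℕ) : ℝ := sSup ((fun l => S.xiStar k l) '' Set.Icc 1 (S.n k - 1))

end HPS

/-- The gap-comparability condition: `max_{1≤l≤n_k-1} ξ_{k,l} ≤ χ · min_{1≤l≤n_k-1} ξ_{k,l}`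
for every `k ≥ 1`. -/
def GapComparable (S : HPS) (χ : ℝ) : Prop :=
  ∀ k, 1 ≤ k → ∀ l l', 1 ≤ l → l ≤ S.n k - 1 → 1 ≤ l' → l' ≤ S.n k - 1 →
    S.ξ k l ≤ χ * S.ξ k l'

/-- `M = ⌊2χ⌋ + 1`. -/
def Mconst (χ : ℝ) : ℕ := ⌊2 * χ⌋₊ + 1

/-- `i_k`: equal to `1` if `n_k < M`, and otherwise the integer with `M^{i_k} ≤ n_k < M^{i_k+1}`. -/
def HPS.ik (S : HPS) (χ : ℝ) (k : ℕ) : ℕ := max 1 (Nat.log (Mconst χ) (S.n k))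

/-- `m_k = i₁ + ⋯ + i_k` (with `m₀ = 0`). -/
def HPS.mIdx (S : HPS) (χ : ℝ) (k : ℕ) : ℕ := ∑ l ∈ Finset.Icc 1 k, S.ik χ l

/-- For `m ≥ 1`, the index `k` with `m_{k-1} < m ≤ m_k`. -/
def HPS.kOf (S : HPS) (χ : ℝ) (m : ℕ) : ℕ := sInf {k | m ≤ S.mIdx χ k}

/-- The data of the sequence `{H_m}` constructed in Lemma 4.1, with its characterizing
properties.  `Br m` is the finite set of branches of `H_m`, a branch being recorded by its
endpoints, and `H_m = ⋃_{p ∈ Br m} [p.1, p.2]`. -/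
structure BranchSeq (S : HPS) (χ : ℝ) where
  Br : ℕ → Finset (ℝ × ℝ)
  /-- each `H_m` has at least one branch -/
  nonempty : ∀ m, (Br m).Nonempty
  /-- branches are nondegenerate closed intervals -/
  lt : ∀ m, ∀ p ∈ Br m, p.1 < p.2
  /-- distinct branches of `H_m` have disjoint interiors -/
  disj : ∀ m, ∀ p ∈ Br m, ∀ q ∈ Br m, p ≠ q →
    Set.Ioo p.1 p.2 ∩ Set.Ioo q.1 q.2 = ∅
  /-- the sequence `H_m` is decreasing under inclusion -/
  dec : ∀ m, (⋃ p ∈ Br (m + 1), Set.Icc p.1 p.2) ⊆ ⋃ p ∈ Br m, Set.Icc p.1 p.2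
  /-- every branch of `H_{m+1}` is contained in a branch of `H_m` -/
  nested : ∀ m, ∀ q ∈ Br (m + 1), ∃ p ∈ Br m, Set.Icc q.1 q.2 ⊆ Set.Icc p.1 p.2
  /-- `E = ⋂_m H_m` -/
  interE : S.E = ⋂ m, ⋃ p ∈ Br m, Set.Icc p.1 p.2
  /-- `H_{m_k} = E_k*`, the branches being exactly the intervals `I_σ*`, `σ ∈ D_k` -/
  levels : ∀ k, (Br (S.mIdx χ k) : Set (ℝ × ℝ)) =
    {p : ℝ × ℝ | ∃ σ : List ℕ, σ.length = k ∧ ValidWord S.n σ ∧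
      p = (S.aStar σ, S.bStar σ)}
  /-- each branch of `H_m` contains at most `M²` branches of `H_{m+1}` -/
  card_le : ∀ m, ∀ p ∈ Br m,
    {q ∈ (Br (m + 1) : Set (ℝ × ℝ)) | Set.Icc q.1 q.2 ⊆ Set.Icc p.1 p.2}.ncard ≤
      (Mconst χ) ^ 2
  /-- for `m_{k-1} < m < m_k`, each branch of `H_{m-1}` contains exactly `M` branches of `H_m` -/
  exactM : ∀ k, 1 ≤ k → ∀ m, S.mIdx χ (k - 1) < m → m < S.mIdx χ k →
    ∀ p ∈ Br (m - 1),
      {q ∈ (Br m : Set (ℝ × ℝ)) | Set.Icc q.1 q.2 ⊆ Set.Icc p.1 p.2}.ncard = Mconst χ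
  /-- for `m_{k-1} < m < m_k`, each branch of `H_m` is the convex hull of a block of
  consecutive intervals `I_σ*`, `σ ∈ D_k`: its endpoints are endpoints of such intervals -/
  hull : ∀ k, 1 ≤ k → ∀ m, S.mIdx χ (k - 1) < m → m < S.mIdx χ k →
    ∀ p ∈ Br m, ∃ σ τ : List ℕ, σ.length = k ∧ τ.length = k ∧
      ValidWord S.n σ ∧ ValidWord S.n τ ∧ p.1 = S.aStar σ ∧ p.2 = S.bStar τ
  /-- `max_{I ∈ H_m} |I| ≤ 2χ · min_{I ∈ H_m} |I|` -/
  comparable : ∀ m, ∀ p ∈ Br m, ∀ q ∈ Br m, p.2 - p.1 ≤ 2 * χ * (q.2 - q.1)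

namespace BranchSeq

variable {S : HPS} {χ : ℝ} (B : BranchSeq S χ)

/-- `l(H_m)`, the total length of the branches of `H_m`. -/
def len (m : ℕ) : ℝ := ∑ p ∈ B.Br m, (p.2 - p.1)

/-- `max_{I branch of H_m} |I|`. -/
def maxLen (m : ℕ) : ℝ :=
  sSup ((fun p : ℝ × ℝ => p.2 - p.1) '' (B.Br m : Set (ℝ × ℝ)))

/-- `min_{I branch of H_m} |I|`. -/
def minLen (m : ℕ) : ℝ :=
  sInf ((fun p : ℝ × ℝ => p.2 - p.1) '' (B.Br m : Set (ℝ × ℝ)))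

/-- `Λ(m) = max {|J|/|I| : I branch of H_{m-1}, J branch of H_m, J ⊆ I}`. -/
def Lam (m : ℕ) : ℝ :=
  sSup {r : ℝ | ∃ p ∈ B.Br (m - 1), ∃ q ∈ B.Br m,
    Set.Icc q.1 q.2 ⊆ Set.Icc p.1 p.2 ∧ r = (q.2 - q.1) / (p.2 - p.1)}

/-- `λ(m) = min {|J|/|I| : I branch of H_{m-1}, J branch of H_m, J ⊆ I}`. -/
def lamSmall (m : ℕ) : ℝ :=
  sInf {r : ℝ | ∃ p ∈ B.Br (m - 1), ∃ q ∈ B.Br m,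
    Set.Icc q.1 q.2 ⊆ Set.Icc p.1 p.2 ∧ r = (q.2 - q.1) / (p.2 - p.1)}

/-- `γ(m) = α̲*_k / max_{I branch of H_{m-1}} |I|`, where `m_{k-1} < m ≤ m_k`. -/
def gam (m : ℕ) : ℝ := S.alphaLo (S.kOf χ m) / B.maxLen (m - 1)

/-- `Γ(m) = α̅*_k / min_{I branch of H_{m-1}} |I|`, where `m_{k-1} < m ≤ m_k`. -/
def Gam (m : ℕ) : ℝ := S.alphaHi (S.kOf χ m) / B.minLen (m - 1)

open Classical in
/-- `S_ε(m) = {j : 1 ≤ j ≤ m, γ(j) ≤ ε}`. -/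
def Sfin (ε : ℝ) (m : ℕ) : Finset ℕ := (Finset.Icc 1 m).filter (fun j => B.gam j ≤ ε)

open Classical in
/-- The branches of `H_{m+1}` contained in the branch `p` of `H_m`. -/
def children (m : ℕ) (p : ℝ × ℝ) : Finset (ℝ × ℝ) :=
  (B.Br (m + 1)).filter (fun q => p.1 ≤ q.1 ∧ q.2 ≤ p.2)

end BranchSeq


section Aux

open Finset in
lemma validWord_append_elim {n : ℕ → ℕ} {σ : List ℕ} {x : ℕ}
    (h : ValidWord n (σ ++ [x])) : ValidWord n σ ∧ 1 ≤ x ∧ x ≤ n (σ.length + 1) := by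
  refine ⟨fun j hj => ?_, ?_, ?_⟩
  · have := h j (by simp; omega)
    rwa [List.getD_append _ _ _ _ hj] at this
  · have := h σ.length (by simp)
    rw [List.getD_append_right _ _ _ _ le_rfl, Nat.sub_self] at this
    exact this.1
  · have := h σ.length (by simp)
    rw [List.getD_append_right _ _ _ _ le_rfl, Nat.sub_self] at this
    exact this.2

lemma validWord_append_intro {n : ℕ → ℕ} {σ : List ℕ} {x : ℕ}
    (hσ : ValidWord n σ) (h1 : 1 ≤ x) (h2 : x ≤ n (σ.length + 1)) :
    ValidWord n (σ ++ [x]) := by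
  intro j hj
  simp only [List.length_append, List.length_singleton] at hj
  rcases lt_or_eq_of_le (Nat.lt_succ_iff.mp hj) with h | h
  · rw [List.getD_append _ _ _ _ h]; exact hσ j h
  · subst h; rw [List.getD_append_right _ _ _ _ le_rfl, Nat.sub_self]
    exact ⟨h1, h2⟩

end Aux


namespace HPS

variable (S : HPS)

lemma len_eq : ∀ (σ : List ℕ), ValidWord S.n σ →
    S.b σ - S.a σ = (S.b [] - S.a []) * ∏ j ∈ Finset.Icc 1 σ.length, S.c j := by
  intro σ
  induction σ using List.reverseRecOn with
  | nil => simp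
  | append_singleton τ x ih =>
    intro hσ
    obtain ⟨hτ, hx1, hx2⟩ := validWord_append_elim hσ
    rw [S.struct.ratio τ hτ x hx1 hx2, ih hτ]
    simp only [List.length_append, List.length_singleton]
    rw [Finset.prod_Icc_succ_top (Nat.le_add_left 1 _)]
    ring

lemma len_pos {σ : List ℕ} (hσ : ValidWord S.n σ) : 0 < S.b σ - S.a σ := by
  rw [S.len_eq σ hσ]
  refine mul_pos (by linarith [S.hab]) (Finset.prod_pos ?_)
  intro i hi
  exact S.hc i (Finset.mem_Icc.mp hi).1

lemma a_le_b {σ : List ℕ} (hσ : ValidWord S.n σ) : S.a σ ≤ S.b σ :=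
  le_of_lt (by linarith [S.len_pos hσ])

lemma sub_endpoints {σ : List ℕ} {x : ℕ} (h : ValidWord S.n (σ ++ [x])) :
    S.a σ ≤ S.a (σ ++ [x]) ∧ S.b (σ ++ [x]) ≤ S.b σ := by
  obtain ⟨hσ, hx1, hx2⟩ := validWord_append_elim h
  have := S.struct.sub σ hσ x hx1 hx2
  rw [Set.Icc_subset_Icc_iff (S.a_le_b h)] at this
  exact ⟨this.1, this.2⟩

lemma b_le_a_of_lt {σ : List ℕ} (hσ : ValidWord S.n σ) {l l' : ℕ}
    (h1 : 1 ≤ l) (hll : l < l') (h2 : l' ≤ S.n (σ.length + 1)) :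
    S.b (σ ++ [l]) ≤ S.a (σ ++ [l']) := by
  induction l' with
  | zero => omega
  | succ m ih =>
    rcases Nat.lt_or_ge l m with hm | hm
    · have hb := ih (by omega) (by omega)
      have hv : ValidWord S.n (σ ++ [m]) :=
        validWord_append_intro hσ (by omega) (by omega)
      have := S.struct.ord σ hσ m (by omega) h2
      linarith [S.a_le_b hv]
    · have : l = m := by omega
      subst this
      exact S.struct.ord σ hσ l h1 h2

lemma a_mono {σ : List ℕ} (hσ : ValidWord S.n σ) {l l' : ℕ}
    (h1 : 1 ≤ l) (hll : l ≤ l') (h2 : l' ≤ S.n (σ.length + 1)) :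
    S.a (σ ++ [l]) ≤ S.a (σ ++ [l']) := by
  rcases Nat.lt_or_ge l l' with h | h
  · have hv : ValidWord S.n (σ ++ [l]) := validWord_append_intro hσ h1 (by omega)
    linarith [S.b_le_a_of_lt hσ h1 h h2, S.a_le_b hv]
  · have : l = l' := by omega
    subst this; rfl

lemma b_mono {σ : List ℕ} (hσ : ValidWord S.n σ) {l l' : ℕ}
    (h1 : 1 ≤ l) (hll : l ≤ l') (h2 : l' ≤ S.n (σ.length + 1)) :
    S.b (σ ++ [l]) ≤ S.b (σ ++ [l']) := by
  rcases Nat.lt_or_ge l l' with h | h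
  · have hv : ValidWord S.n (σ ++ [l']) := validWord_append_intro hσ (by omega) h2
    linarith [S.b_le_a_of_lt hσ h1 h h2, S.a_le_b hv]
  · have : l = l' := by omega
    subst this; rfl

lemma gapsum {σ : List ℕ} (hσ : ValidWord S.n σ) :
    S.ξ (σ.length + 1) 0 + S.ξ (σ.length + 1) (S.n (σ.length + 1)) < S.b σ - S.a σ := by
  set N := S.n (σ.length + 1) with hN
  have hN2 : 2 ≤ N := S.hn (σ.length + 1) (by omega)
  have h0 := S.struct.gap0 σ hσ
  have hn := S.struct.gapn σ hσ
  have hm : S.a (σ ++ [1]) ≤ S.a (σ ++ [N]) := S.a_mono hσ le_rfl (by omega) le_rfl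
  have hv : ValidWord S.n (σ ++ [N]) := validWord_append_intro hσ (by omega) le_rfl
  have := S.len_pos hv
  linarith

lemma aStar_lt_bStar {σ : List ℕ} (hσ : ValidWord S.n σ) : S.aStar σ < S.bStar σ := by
  have := S.gapsum hσ
  simp only [aStar, bStar]
  linarith

lemma a_le_aStar (σ : List ℕ) : S.a σ ≤ S.aStar σ := by
  have := S.hξ (σ.length + 1) (by omega) 0 (Nat.zero_le _)
  simp only [aStar]; linarith

lemma bStar_le_b (σ : List ℕ) : S.bStar σ ≤ S.b σ := by
  have := S.hξ (σ.length + 1) (by omega) (S.n (σ.length + 1)) le_rfl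
  simp only [bStar]; linarith

lemma lex_sep : ∀ (ρ ρ' : List ℕ), ρ.length = ρ'.length → ValidWord S.n ρ →
    ValidWord S.n ρ' → ρ ≠ ρ' → S.b ρ ≤ S.a ρ' ∨ S.b ρ' ≤ S.a ρ := by
  intro ρ
  induction ρ using List.reverseRecOn with
  | nil =>
    intro ρ' hlen _ _ hne
    exact absurd (List.length_eq_zero_iff.mp hlen.symm).symm hne
  | append_singleton τ x ih =>
    intro ρ' hlen hv hv' hne
    rcases List.eq_nil_or_concat ρ' with h | ⟨τ', y, h⟩
    · subst h; simp at hlen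
    rw [List.concat_eq_append] at h
    subst h
    have hlt : τ.length = τ'.length := by
      simpa using hlen
    obtain ⟨hτ, hx1, hx2⟩ := validWord_append_elim hv
    obtain ⟨hτ', hy1, hy2⟩ := validWord_append_elim hv'
    by_cases hττ : τ = τ'
    · subst hττ
      have hxy : x ≠ y := by
        intro h; exact hne (by rw [h])
      rcases Nat.lt_or_ge x y with h | h
      · exact Or.inl (S.b_le_a_of_lt hτ hx1 h hy2)
      · exact Or.inr (S.b_le_a_of_lt hτ hy1 (by omega) hx2)
    · rcases ih τ' hlt hτ hτ' hττ with h | h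
      · left
        have h1 := (S.sub_endpoints hv).2
        have h2 := (S.sub_endpoints hv').1
        linarith
      · right
        have h1 := (S.sub_endpoints hv').2
        have h2 := (S.sub_endpoints hv).1
        linarith

lemma extends_of_aStar {ρ σ : List ℕ} (hρ : ValidWord S.n ρ) (hσ : ValidWord S.n σ)
    (hlen : σ.length = ρ.length + 1) {y : ℝ}
    (h1 : S.a ρ ≤ S.aStar σ) (h2 : S.aStar σ < y) (h3 : y ≤ S.b ρ) :
    ∃ l, 1 ≤ l ∧ l ≤ S.n (ρ.length + 1) ∧ σ = ρ ++ [l] := by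
  rcases List.eq_nil_or_concat σ with h | ⟨τ, t, h⟩
  · subst h; simp at hlen
  rw [List.concat_eq_append] at h
  subst h
  have hlt : τ.length = ρ.length := by simpa using hlen
  obtain ⟨hτ, ht1, ht2⟩ := validWord_append_elim hσ
  by_cases hττ : τ = ρ
  · subst hττ; exact ⟨t, ht1, ht2, rfl⟩
  · exfalso
    rcases S.lex_sep τ ρ (by omega) hτ hρ hττ with h | h
    · have e1 := S.aStar_lt_bStar hσ
      have e2 := S.bStar_le_b (τ ++ [t])
      have e3 := (S.sub_endpoints hσ).2
      linarith
    · have e1 := (S.sub_endpoints hσ).1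
      have e2 := S.a_le_aStar (τ ++ [t])
      linarith

lemma extends_of_bStar {ρ τ : List ℕ} (hρ : ValidWord S.n ρ) (hτ : ValidWord S.n τ)
    (hlen : τ.length = ρ.length + 1) {x : ℝ}
    (h1 : S.a ρ ≤ x) (h2 : x < S.bStar τ) (h3 : S.bStar τ ≤ S.b ρ) :
    ∃ l, 1 ≤ l ∧ l ≤ S.n (ρ.length + 1) ∧ τ = ρ ++ [l] := by
  rcases List.eq_nil_or_concat τ with h | ⟨τ₀, t, h⟩
  · subst h; simp at hlen
  rw [List.concat_eq_append] at h
  subst h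
  have hlt : τ₀.length = ρ.length := by simpa using hlen
  obtain ⟨hτ₀, ht1, ht2⟩ := validWord_append_elim hτ
  by_cases hττ : τ₀ = ρ
  · subst hττ; exact ⟨t, ht1, ht2, rfl⟩
  · exfalso
    rcases S.lex_sep τ₀ ρ (by omega) hτ₀ hρ hττ with h | h
    · have e1 := S.bStar_le_b (τ₀ ++ [t])
      have e2 := (S.sub_endpoints hτ).2
      linarith
    · have e1 := (S.sub_endpoints hτ).1
      have e2 := S.a_le_aStar (τ₀ ++ [t])
      have e3 := S.aStar_lt_bStar hτ
      linarith

lemma alphaLo_nonneg (k : ℕ) (hk : 1 ≤ k) : 0 ≤ S.alphaLo k := by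
  have hn2 := S.hn k hk
  apply le_csInf
  · refine ⟨S.xiStar k 1, ⟨1, ?_, rfl⟩⟩
    simp only [Set.mem_Icc]; omega
  · rintro x ⟨l, hl, rfl⟩
    simp only [Set.mem_Icc] at hl
    have hl0 : l ≠ 0 := by omega
    have hln : l ≠ S.n k := by omega
    simp only [xiStar, hl0, hln, if_false]
    have t1 := S.hξ k hk l (by omega)
    have t2 := S.hξ (k + 1) (by omega) 0 (Nat.zero_le _)
    have t3 := S.hξ (k + 1) (by omega) (S.n (k + 1)) le_rfl
    linarith

lemma gap_ge {ρ : List ℕ} (hρ : ValidWord S.n ρ) {l₁ l₂ : ℕ}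
    (h11 : 1 ≤ l₁) (h12 : l₁ ≤ S.n (ρ.length + 1))
    (h21 : 1 ≤ l₂) (h22 : l₂ ≤ S.n (ρ.length + 1))
    (h : S.bStar (ρ ++ [l₁]) ≤ S.aStar (ρ ++ [l₂])) :
    S.alphaLo (ρ.length + 1) ≤ S.aStar (ρ ++ [l₂]) - S.bStar (ρ ++ [l₁]) := by
  have hv1 : ValidWord S.n (ρ ++ [l₁]) := validWord_append_intro hρ h11 h12
  have hv2 : ValidWord S.n (ρ ++ [l₂]) := validWord_append_intro hρ h21 h22
  have hlt : l₁ < l₂ := by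
    by_contra hcon
    push_neg at hcon
    have ha : S.a (ρ ++ [l₂]) ≤ S.a (ρ ++ [l₁]) := S.a_mono hρ h21 hcon h12
    have e1 := S.aStar_lt_bStar hv1
    simp only [aStar, bStar] at h e1
    simp only [List.length_append, List.length_singleton] at h e1
    have e2 := S.bStar_le_b (ρ ++ [l₁])
    simp only [aStar, bStar, List.length_append, List.length_singleton] at e2 ⊢
    linarith
  have hgap := S.struct.gapl ρ hρ l₁ h11 (by omega)
  have hmono : S.a (ρ ++ [l₁ + 1]) ≤ S.a (ρ ++ [l₂]) := S.a_mono hρ (by omega) (by omega) h22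
  have hkey : S.ξ (ρ.length + 1) l₁ ≤ S.a (ρ ++ [l₂]) - S.b (ρ ++ [l₁]) := by linarith
  have hxi : S.xiStar (ρ.length + 1) l₁ ≤ S.aStar (ρ ++ [l₂]) - S.bStar (ρ ++ [l₁]) := by
    have hl0 : l₁ ≠ 0 := by omega
    have hln : l₁ ≠ S.n (ρ.length + 1) := by omega
    simp only [xiStar, hl0, hln, if_false]
    simp only [aStar, bStar, List.length_append, List.length_singleton]
    linarith
  refine le_trans (csInf_le ?_ ?_) hxi
  · exact ((Set.finite_Icc _ _).image _).bddBelow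
  · exact ⟨l₁, by simp only [Set.mem_Icc]; omega, rfl⟩

lemma star_sub {ρ : List ℕ} (hρ : ValidWord S.n ρ) {l : ℕ}
    (h1 : 1 ≤ l) (h2 : l ≤ S.n (ρ.length + 1)) :
    S.aStar ρ ≤ S.aStar (ρ ++ [l]) ∧ S.bStar (ρ ++ [l]) ≤ S.bStar ρ := by
  have hg0 := S.struct.gap0 ρ hρ
  have hgn := S.struct.gapn ρ hρ
  have ha : S.a (ρ ++ [1]) ≤ S.a (ρ ++ [l]) := S.a_mono hρ le_rfl h1 h2
  have hb : S.b (ρ ++ [l]) ≤ S.b (ρ ++ [S.n (ρ.length + 1)]) := S.b_mono hρ h1 h2 le_rfl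
  constructor
  · have := S.a_le_aStar (ρ ++ [l])
    simp only [aStar] at this ⊢
    linarith
  · have := S.bStar_le_b (ρ ++ [l])
    simp only [bStar] at this ⊢
    linarith

end HPS


section Idx

variable (S : HPS) (χ : ℝ)

lemma mIdx_zero : S.mIdx χ 0 = 0 := by simp [HPS.mIdx]

lemma ik_pos (k : ℕ) : 1 ≤ S.ik χ k := le_max_left _ _

lemma mIdx_succ {k : ℕ} (hk : 1 ≤ k) :
    S.mIdx χ k = S.mIdx χ (k - 1) + S.ik χ k := by
  obtain ⟨k', rfl⟩ : ∃ k', k = k' + 1 := ⟨k - 1, by omega⟩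
  simp only [HPS.mIdx, Nat.add_sub_cancel]
  exact Finset.sum_Icc_succ_top (by omega) _

lemma le_mIdx (k : ℕ) : k ≤ S.mIdx χ k := by
  have : ∑ l ∈ Finset.Icc 1 k, 1 ≤ ∑ l ∈ Finset.Icc 1 k, S.ik χ l :=
    Finset.sum_le_sum (fun i _ => ik_pos S χ i)
  simpa [Nat.card_Icc, HPS.mIdx] using this

lemma mIdx_mono {k k' : ℕ} (h : k ≤ k') : S.mIdx χ k ≤ S.mIdx χ k' := by
  exact Finset.sum_le_sum_of_subset (Finset.Icc_subset_Icc le_rfl h)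

lemma kOf_spec {j : ℕ} (hj : 1 ≤ j) :
    1 ≤ S.kOf χ j ∧ S.mIdx χ (S.kOf χ j - 1) < j ∧ j ≤ S.mIdx χ (S.kOf χ j) := by
  have hne : {k | j ≤ S.mIdx χ k}.Nonempty := ⟨j, le_mIdx S χ j⟩
  have hmem : j ≤ S.mIdx χ (S.kOf χ j) := Nat.sInf_mem hne
  have hpos : 1 ≤ S.kOf χ j := by
    rcases Nat.eq_zero_or_pos (S.kOf χ j) with h0 | h
    · rw [h0, mIdx_zero] at hmem; omega
    · exact h
  refine ⟨hpos, ?_, hmem⟩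
  by_contra h
  push_neg at h
  have : S.kOf χ j ≤ S.kOf χ j - 1 := Nat.sInf_le h
  omega

end Idx

namespace BranchSeq

variable {S : HPS} {χ : ℝ} (B : BranchSeq S χ)

lemma chain : ∀ (d m : ℕ), ∀ q ∈ B.Br (m + d), ∃ p ∈ B.Br m,
    Set.Icc q.1 q.2 ⊆ Set.Icc p.1 p.2 := by
  intro d
  induction d with
  | zero => exact fun m q hq => ⟨q, hq, subset_rfl⟩
  | succ d ih =>
    intro m q hq
    obtain ⟨p', hp', hsub'⟩ := B.nested (m + d) q hq
    obtain ⟨p, hp, hsub⟩ := ih m p' hp'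
    exact ⟨p, hp, hsub'.trans hsub⟩

lemma chain' {m m' : ℕ} (h : m ≤ m') {q : ℝ × ℝ} (hq : q ∈ B.Br m') :
    ∃ p ∈ B.Br m, Set.Icc q.1 q.2 ⊆ Set.Icc p.1 p.2 := by
  obtain ⟨d, rfl⟩ : ∃ d, m' = m + d := ⟨m' - m, by omega⟩
  exact B.chain d m q hq

lemma container_unique {m : ℕ} {p p' : ℝ × ℝ} (hp : p ∈ B.Br m) (hp' : p' ∈ B.Br m)
    {q : ℝ × ℝ} (hq : q.1 < q.2)
    (h1 : Set.Icc q.1 q.2 ⊆ Set.Icc p.1 p.2) (h2 : Set.Icc q.1 q.2 ⊆ Set.Icc p'.1 p'.2) :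
    p = p' := by
  by_contra hne
  have hd := B.disj m p hp p' hp' hne
  have hico : Set.Icc q.1 q.2 ⊆ Set.Icc p.1 p.2 → p.1 ≤ q.1 ∧ q.2 ≤ p.2 := fun h =>
    (Set.Icc_subset_Icc_iff hq.le).mp h
  obtain ⟨e1, e2⟩ := hico h1
  obtain ⟨e3, e4⟩ := (Set.Icc_subset_Icc_iff hq.le).mp h2
  have hx : (q.1 + q.2) / 2 ∈ Set.Ioo p.1 p.2 ∩ Set.Ioo p'.1 p'.2 := by
    refine ⟨⟨by linarith, by linarith⟩, by linarith, by linarith⟩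
  rw [hd] at hx
  exact hx

lemma ordered_of_ne {m : ℕ} {q q' : ℝ × ℝ} (hq : q ∈ B.Br m) (hq' : q' ∈ B.Br m)
    (hne : q ≠ q') : q.2 ≤ q'.1 ∨ q'.2 ≤ q.1 := by
  by_contra h
  push_neg at h
  obtain ⟨h1, h2⟩ := h
  have hd := B.disj m q hq q' hq' hne
  have l1 := B.lt m q hq
  have l2 := B.lt m q' hq'
  have hx : max q.1 q'.1 < min q.2 q'.2 := by
    rw [max_lt_iff, lt_min_iff, lt_min_iff]
    exact ⟨⟨l1, h2⟩, h1, l2⟩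
  have hmem : (max q.1 q'.1 + min q.2 q'.2) / 2 ∈ Set.Ioo q.1 q.2 ∩ Set.Ioo q'.1 q'.2 := by
    have a1 : q.1 ≤ max q.1 q'.1 := le_max_left _ _
    have a2 : q'.1 ≤ max q.1 q'.1 := le_max_right _ _
    have a3 : min q.2 q'.2 ≤ q.2 := min_le_left _ _
    have a4 : min q.2 q'.2 ≤ q'.2 := min_le_right _ _
    constructor <;> constructor <;> linarith
  rw [hd] at hmem
  exact hmem

lemma le_maxLen {m : ℕ} {p : ℝ × ℝ} (hp : p ∈ B.Br m) : p.2 - p.1 ≤ B.maxLen m := by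
  apply le_csSup
  · exact ((B.Br m).finite_toSet.image _).bddAbove
  · exact ⟨p, hp, rfl⟩

lemma maxLen_pos (m : ℕ) : 0 < B.maxLen m := by
  obtain ⟨p, hp⟩ := B.nonempty m
  exact lt_of_lt_of_le (by linarith [B.lt m p hp]) (B.le_maxLen hp)

end BranchSeq

section SumLen

open MeasureTheory

lemma sum_len_le {F : Finset (ℝ × ℝ)} {A Bd : ℝ} (hAB : A ≤ Bd)
    (hlt : ∀ p ∈ F, p.1 < p.2)
    (hsub : ∀ p ∈ F, A ≤ p.1 ∧ p.2 ≤ Bd)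
    (hdisj : ∀ p ∈ F, ∀ q ∈ F, p ≠ q → Set.Ioo p.1 p.2 ∩ Set.Ioo q.1 q.2 = ∅) :
    ∑ p ∈ F, (p.2 - p.1) ≤ Bd - A := by
  have hvol : ∑ p ∈ F, volume (Set.Ioo p.1 p.2) = volume (⋃ p ∈ F, Set.Ioo p.1 p.2) := by
    refine (measure_biUnion_finset ?_ (fun p _ => measurableSet_Ioo)).symm
    intro p hp q hq hne
    simp only [Function.onFun]
    rw [Set.disjoint_iff_inter_eq_empty]
    exact hdisj p hp q hq hne
  have hle : volume (⋃ p ∈ F, Set.Ioo p.1 p.2) ≤ volume (Set.Icc A Bd) := by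
    apply measure_mono
    intro x hx
    simp only [Set.mem_iUnion] at hx
    obtain ⟨p, hp, hxp⟩ := hx
    obtain ⟨e1, e2⟩ := hsub p hp
    exact ⟨by linarith [hxp.1], by linarith [hxp.2]⟩
  have hsum : ∑ p ∈ F, volume (Set.Ioo p.1 p.2) = ENNReal.ofReal (∑ p ∈ F, (p.2 - p.1)) := by
    rw [ENNReal.ofReal_sum_of_nonneg (fun p hp => by linarith [hlt p hp])]
    exact Finset.sum_congr rfl (fun p _ => Real.volume_Ioo)
  have hle2 : ENNReal.ofReal (∑ p ∈ F, (p.2 - p.1)) ≤ ENNReal.ofReal (Bd - A) := by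
    rw [← hsum, hvol, ← Real.volume_Icc]
    exact hle
  have := (ENNReal.ofReal_le_ofReal_iff (by linarith : (0:ℝ) ≤ Bd - A)).mp hle2
  linarith

end SumLen


namespace BranchSeq

variable {S : HPS} {χ : ℝ} (B : BranchSeq S χ)

lemma br_eq_biUnion {m₀ m : ℕ} (h : m₀ ≤ m) :
    B.Br m = (B.Br m₀).biUnion
      (fun g => (B.Br m).filter (fun q => g.1 ≤ q.1 ∧ q.2 ≤ g.2)) := by
  ext q
  simp only [Finset.mem_biUnion, Finset.mem_filter]
  constructor
  · intro hq
    obtain ⟨g, hg, hsub⟩ := B.chain' h hq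
    exact ⟨g, hg, hq, (Set.Icc_subset_Icc_iff (B.lt m q hq).le).mp hsub⟩
  · rintro ⟨g, hg, hq, _⟩; exact hq

lemma filters_disjoint {m₀ m : ℕ} (h : m₀ ≤ m) {g g' : ℝ × ℝ} (hg : g ∈ B.Br m₀)
    (hg' : g' ∈ B.Br m₀) (hne : g ≠ g') :
    Disjoint ((B.Br m).filter (fun q => g.1 ≤ q.1 ∧ q.2 ≤ g.2))
      ((B.Br m).filter (fun q => g'.1 ≤ q.1 ∧ q.2 ≤ g'.2)) := by
  rw [Finset.disjoint_left]
  rintro q hq1 hq2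
  rw [Finset.mem_filter] at hq1 hq2
  obtain ⟨hq, e1, e2⟩ := hq1
  obtain ⟨-, e3, e4⟩ := hq2
  exact hne (B.container_unique hg hg' (B.lt m q hq)
    (Set.Icc_subset_Icc e1 e2) (Set.Icc_subset_Icc e3 e4))

lemma sum_partition {M : Type*} [AddCommMonoid M] {m₀ m : ℕ} (h : m₀ ≤ m) (f : ℝ × ℝ → M) :
    ∑ q ∈ B.Br m, f q
      = ∑ g ∈ B.Br m₀, ∑ q ∈ (B.Br m).filter (fun q => g.1 ≤ q.1 ∧ q.2 ≤ g.2), f q := by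
  conv_lhs => rw [br_eq_biUnion B h]
  exact Finset.sum_biUnion (fun g hg g' hg' hne => B.filters_disjoint h hg hg' hne)

lemma filter_step {M : Type*} [AddCommMonoid M] {m₀ m : ℕ} (h : m₀ ≤ m) {g : ℝ × ℝ}
    (hg : g ∈ B.Br m₀) (f : ℝ × ℝ → M) :
    ∑ q ∈ (B.Br (m + 1)).filter (fun q => g.1 ≤ q.1 ∧ q.2 ≤ g.2), f q
      = ∑ p ∈ (B.Br m).filter (fun q => g.1 ≤ q.1 ∧ q.2 ≤ g.2),
          ∑ q ∈ (B.Br (m + 1)).filter (fun q => p.1 ≤ q.1 ∧ q.2 ≤ p.2), f q := by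
  have hset : (B.Br (m + 1)).filter (fun q => g.1 ≤ q.1 ∧ q.2 ≤ g.2)
      = ((B.Br m).filter (fun q => g.1 ≤ q.1 ∧ q.2 ≤ g.2)).biUnion
          (fun p => (B.Br (m + 1)).filter (fun q => p.1 ≤ q.1 ∧ q.2 ≤ p.2)) := by
    ext q
    simp only [Finset.mem_biUnion, Finset.mem_filter]
    constructor
    · rintro ⟨hq, e1, e2⟩
      obtain ⟨p, hp, hsub⟩ := B.nested m q hq
      obtain ⟨f1, f2⟩ := (Set.Icc_subset_Icc_iff (B.lt _ q hq).le).mp hsub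
      obtain ⟨g', hg', hsub'⟩ := B.chain' h hp
      obtain ⟨f3, f4⟩ := (Set.Icc_subset_Icc_iff (B.lt _ p hp).le).mp hsub'
      have : g' = g := B.container_unique hg' hg (B.lt _ q hq)
        ((Set.Icc_subset_Icc f1 f2).trans (Set.Icc_subset_Icc f3 f4))
        (Set.Icc_subset_Icc e1 e2)
      subst this
      exact ⟨p, ⟨hp, f3, f4⟩, hq, f1, f2⟩
    · rintro ⟨p, ⟨hp, e3, e4⟩, hq, e1, e2⟩
      exact ⟨hq, by linarith, by linarith⟩
  rw [hset]
  refine Finset.sum_biUnion ?_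
  intro p hp p' hp' hne
  exact B.filters_disjoint (Nat.le_succ m) (Finset.mem_filter.mp hp).1
    (Finset.mem_filter.mp hp').1 hne

lemma ncard_eq_filter_card (m : ℕ) (p : ℝ × ℝ) :
    {q ∈ (B.Br m : Set (ℝ × ℝ)) | Set.Icc q.1 q.2 ⊆ Set.Icc p.1 p.2}.ncard
      = ((B.Br m).filter (fun q => p.1 ≤ q.1 ∧ q.2 ≤ p.2)).card := by
  have hset : {q ∈ (B.Br m : Set (ℝ × ℝ)) | Set.Icc q.1 q.2 ⊆ Set.Icc p.1 p.2}
      = ↑((B.Br m).filter (fun q => p.1 ≤ q.1 ∧ q.2 ≤ p.2)) := by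
    ext q
    simp only [Set.mem_setOf_eq, Finset.coe_filter, Finset.mem_coe]
    constructor
    · rintro ⟨hq, hsub⟩
      exact ⟨hq, (Set.Icc_subset_Icc_iff (B.lt m q hq).le).mp hsub⟩
    · rintro ⟨hq, h1, h2⟩
      exact ⟨hq, Set.Icc_subset_Icc h1 h2⟩
  rw [hset, Set.ncard_coe_finset]

lemma count_within {k : ℕ} (hk : 1 ≤ k) (i : ℕ)
    (hi : S.mIdx χ (k - 1) + i < S.mIdx χ k)
    {g : ℝ × ℝ} (hg : g ∈ B.Br (S.mIdx χ (k - 1))) :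
    ((B.Br (S.mIdx χ (k - 1) + i)).filter (fun q => g.1 ≤ q.1 ∧ q.2 ≤ g.2)).card
      = (Mconst χ) ^ i := by
  induction i with
  | zero =>
    have : (B.Br (S.mIdx χ (k - 1) + 0)).filter (fun q => g.1 ≤ q.1 ∧ q.2 ≤ g.2) = {g} := by
      ext q
      simp only [Finset.mem_filter, Finset.mem_singleton, Nat.add_zero]
      constructor
      · rintro ⟨hq, e1, e2⟩
        exact B.container_unique hq (by simpa using hg) (B.lt _ q hq)
          subset_rfl (Set.Icc_subset_Icc e1 e2)
      · rintro rfl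
        exact ⟨by simpa using hg, le_rfl, le_rfl⟩
    rw [this]; simp
  | succ i ih =>
    have hi' : S.mIdx χ (k - 1) + i < S.mIdx χ k := by omega
    have hstep := B.filter_step (Nat.le_add_right (S.mIdx χ (k - 1)) i) hg
      (fun _ => (1 : ℕ))
    have hcard : ∀ p ∈ (B.Br (S.mIdx χ (k - 1) + i)).filter
        (fun q => g.1 ≤ q.1 ∧ q.2 ≤ g.2),
        ((B.Br (S.mIdx χ (k - 1) + i + 1)).filter
          (fun q => p.1 ≤ q.1 ∧ q.2 ≤ p.2)).card = Mconst χ := by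
      intro p hp
      have hp' : p ∈ B.Br (S.mIdx χ (k - 1) + (i + 1) - 1) := by
        have : S.mIdx χ (k - 1) + (i + 1) - 1 = S.mIdx χ (k - 1) + i := by omega
        rw [this]
        exact (Finset.mem_filter.mp hp).1
      have := B.exactM k hk (S.mIdx χ (k - 1) + (i + 1)) (by omega) (by omega) p hp'
      rw [B.ncard_eq_filter_card] at this
      have harr : S.mIdx χ (k - 1) + (i + 1) = S.mIdx χ (k - 1) + i + 1 := by omega
      rw [harr] at this
      exact this
    calc ((B.Br (S.mIdx χ (k - 1) + (i + 1))).filter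
        (fun q => g.1 ≤ q.1 ∧ q.2 ≤ g.2)).card
        = ∑ p ∈ (B.Br (S.mIdx χ (k - 1) + i)).filter
            (fun q => g.1 ≤ q.1 ∧ q.2 ≤ g.2),
            ((B.Br (S.mIdx χ (k - 1) + i + 1)).filter
              (fun q => p.1 ≤ q.1 ∧ q.2 ≤ p.2)).card := by
          rw [Finset.card_eq_sum_ones]
          have harr : S.mIdx χ (k - 1) + (i + 1) = S.mIdx χ (k - 1) + i + 1 := by omega
          rw [harr]
          rw [hstep]
          exact Finset.sum_congr rfl (fun p _ => (Finset.card_eq_sum_ones _).symm)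
      _ = ∑ p ∈ (B.Br (S.mIdx χ (k - 1) + i)).filter
            (fun q => g.1 ≤ q.1 ∧ q.2 ≤ g.2), Mconst χ :=
          Finset.sum_congr rfl hcard
      _ = (Mconst χ) ^ (i + 1) := by
          rw [Finset.sum_const, ih hi', smul_eq_mul]
          ring

lemma count_level {k : ℕ} (hk : 1 ≤ k) {ρ : List ℕ} (hρl : ρ.length = k - 1)
    (hρv : ValidWord S.n ρ) {g : ℝ × ℝ} (hg1 : g.1 = S.aStar ρ) (hg2 : g.2 = S.bStar ρ) :
    ((B.Br (S.mIdx χ k)).filter (fun q => g.1 ≤ q.1 ∧ q.2 ≤ g.2)).card = S.n k := by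
  have hnk : S.n (ρ.length + 1) = S.n k := by rw [hρl]; congr 1; omega
  have hkk : ρ.length + 1 = k := by omega
  have hmem : ∀ l, 1 ≤ l → l ≤ S.n k →
      (S.aStar (ρ ++ [l]), S.bStar (ρ ++ [l])) ∈ B.Br (S.mIdx χ k) := by
    intro l h1 h2
    have hv : ValidWord S.n (ρ ++ [l]) := validWord_append_intro hρv h1 (by omega)
    have : ((S.aStar (ρ ++ [l]), S.bStar (ρ ++ [l])) : ℝ × ℝ)
        ∈ (B.Br (S.mIdx χ k) : Set (ℝ × ℝ)) := by
      rw [B.levels k]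
      exact ⟨ρ ++ [l], by simp [hρl]; omega, hv, rfl⟩
    exact_mod_cast this
  have hset : (B.Br (S.mIdx χ k)).filter (fun q => g.1 ≤ q.1 ∧ q.2 ≤ g.2)
      = (Finset.Icc 1 (S.n k)).image
          (fun l => (S.aStar (ρ ++ [l]), S.bStar (ρ ++ [l]))) := by
    ext q
    simp only [Finset.mem_filter, Finset.mem_image, Finset.mem_Icc]
    constructor
    · rintro ⟨hq, e1, e2⟩
      have hq' : q ∈ (B.Br (S.mIdx χ k) : Set (ℝ × ℝ)) := hq
      rw [B.levels k] at hq'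
      obtain ⟨σ, hσl, hσv, rfl⟩ := hq'
      simp only at e1 e2 ⊢
      rw [hg1] at e1; rw [hg2] at e2
      obtain ⟨l, hl1, hl2, rfl⟩ := S.extends_of_aStar hρv hσv (by omega)
        (le_trans (S.a_le_aStar ρ) e1) (S.aStar_lt_bStar hσv)
        (le_trans e2 (S.bStar_le_b ρ))
      exact ⟨l, ⟨hl1, by omega⟩, rfl⟩
    · rintro ⟨l, ⟨h1, h2⟩, rfl⟩
      refine ⟨hmem l h1 h2, ?_, ?_⟩
      · rw [hg1]
        exact (S.star_sub hρv h1 (by omega)).1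
      · rw [hg2]
        exact (S.star_sub hρv h1 (by omega)).2
  rw [hset, Finset.card_image_of_injOn, Nat.card_Icc]
  · omega
  · intro l hl l' hl' heq
    simp only [Finset.coe_Icc, Set.mem_Icc] at hl hl'
    by_contra hne
    have key : ∀ x y : ℕ, 1 ≤ x → x ≤ S.n k → 1 ≤ y → y ≤ S.n k → x < y →
        S.aStar (ρ ++ [x]) < S.aStar (ρ ++ [y]) := by
      intro x y hx1 hx2 hy1 hy2 hxy
      have hvx : ValidWord S.n (ρ ++ [x]) := validWord_append_intro hρv hx1 (by omega)
      have e1 := S.aStar_lt_bStar hvx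
      have e2 := S.bStar_le_b (ρ ++ [x])
      have e3 := S.b_le_a_of_lt hρv hx1 hxy (by omega)
      have e4 := S.a_le_aStar (ρ ++ [y])
      linarith
    have : S.aStar (ρ ++ [l]) = S.aStar (ρ ++ [l']) := congrArg Prod.fst heq
    rcases Nat.lt_or_ge l l' with h | h
    · exact absurd this (ne_of_lt (key l l' hl.1 hl.2 hl'.1 hl'.2 h))
    · have h' : l' < l := by omega
      exact absurd this.symm (ne_of_lt (key l' l hl'.1 hl'.2 hl.1 hl.2 h'))

end BranchSeq


lemma Mconst_two_le {χ : ℝ} (hχ : 1 ≤ χ) : 2 ≤ Mconst χ := by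
  have : 1 ≤ ⌊2 * χ⌋₊ := Nat.le_floor (by push_cast; linarith)
  simp only [Mconst]; omega

lemma two_mul_pow_le (S : HPS) (χ : ℝ) (hχ : 1 ≤ χ) {k : ℕ} (hk : 1 ≤ k) :
    2 * (Mconst χ) ^ (S.ik χ k - 1) ≤ S.n k := by
  have hn2 := S.hn k hk
  have hM := Mconst_two_le hχ
  rcases le_or_gt (Nat.log (Mconst χ) (S.n k)) 1 with h | h
  · have : S.ik χ k = 1 := by
      simp only [HPS.ik]; omega
    rw [this]; simpa using hn2
  · have hik : S.ik χ k = Nat.log (Mconst χ) (S.n k) := by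
      simp only [HPS.ik]; omega
    have hpow : (Mconst χ) ^ (Nat.log (Mconst χ) (S.n k)) ≤ S.n k :=
      Nat.pow_log_le_self (Mconst χ) (by omega)
    calc 2 * (Mconst χ) ^ (S.ik χ k - 1) ≤ (Mconst χ) * (Mconst χ) ^ (S.ik χ k - 1) :=
          Nat.mul_le_mul_right _ hM
      _ = (Mconst χ) ^ (S.ik χ k - 1 + 1) := by rw [pow_succ]; ring
      _ = (Mconst χ) ^ (Nat.log (Mconst χ) (S.n k)) := by
          congr 1; omega
      _ ≤ S.n k := hpow

namespace BranchSeq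

variable {S : HPS} {χ : ℝ} (B : BranchSeq S χ)

lemma card_two_le (hχ : 1 ≤ χ) {j : ℕ} (hj : 1 ≤ j) :
    2 * (B.Br (j - 1)).card ≤ (B.Br j).card := by
  obtain ⟨hk1, hk2, hk3⟩ := kOf_spec S χ hj
  set k := S.kOf χ j with hkdef
  have hM := Mconst_two_le hχ
  rcases Nat.lt_or_ge j (S.mIdx χ k) with hcase | hcase
  · -- interior step: every parent has exactly M children
    have htot : (B.Br j).card
        = ∑ p ∈ B.Br (j - 1), ((B.Br j).filter (fun q => p.1 ≤ q.1 ∧ q.2 ≤ p.2)).card := by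
      rw [Finset.card_eq_sum_ones, B.sum_partition (by omega : j - 1 ≤ j)]
      exact Finset.sum_congr rfl (fun p _ => (Finset.card_eq_sum_ones _).symm)
    have heach : ∀ p ∈ B.Br (j - 1),
        ((B.Br j).filter (fun q => p.1 ≤ q.1 ∧ q.2 ≤ p.2)).card = Mconst χ := by
      intro p hp
      have := B.exactM k hk1 j hk2 hcase p hp
      rwa [B.ncard_eq_filter_card] at this
    rw [htot, Finset.sum_congr rfl heach, Finset.sum_const, smul_eq_mul]
    calc 2 * (B.Br (j - 1)).card ≤ Mconst χ * (B.Br (j - 1)).card :=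
          Nat.mul_le_mul_right _ hM
      _ = (B.Br (j - 1)).card * Mconst χ := Nat.mul_comm _ _
  · -- boundary step: j = mIdx k
    have hjeq : j = S.mIdx χ k := le_antisymm hk3 hcase
    have hsucc := mIdx_succ S χ hk1
    have hik := ik_pos S χ k
    have hm0 : S.mIdx χ (k - 1) ≤ j - 1 := by omega
    have hcard1 : (B.Br (j - 1)).card
        = ∑ g ∈ B.Br (S.mIdx χ (k - 1)),
            ((B.Br (j - 1)).filter (fun q => g.1 ≤ q.1 ∧ q.2 ≤ g.2)).card := by
      rw [Finset.card_eq_sum_ones, B.sum_partition hm0]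
      exact Finset.sum_congr rfl (fun p _ => (Finset.card_eq_sum_ones _).symm)
    have hcard2 : (B.Br j).card
        = ∑ g ∈ B.Br (S.mIdx χ (k - 1)),
            ((B.Br j).filter (fun q => g.1 ≤ q.1 ∧ q.2 ≤ g.2)).card := by
      rw [Finset.card_eq_sum_ones, B.sum_partition (by omega : S.mIdx χ (k - 1) ≤ j)]
      exact Finset.sum_congr rfl (fun p _ => (Finset.card_eq_sum_ones _).symm)
    have heach1 : ∀ g ∈ B.Br (S.mIdx χ (k - 1)),
        ((B.Br (j - 1)).filter (fun q => g.1 ≤ q.1 ∧ q.2 ≤ g.2)).card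
          = (Mconst χ) ^ (S.ik χ k - 1) := by
      intro g hg
      have harr : j - 1 = S.mIdx χ (k - 1) + (S.ik χ k - 1) := by omega
      rw [harr]
      exact B.count_within hk1 (S.ik χ k - 1) (by omega) hg
    have heach2 : ∀ g ∈ B.Br (S.mIdx χ (k - 1)),
        ((B.Br j).filter (fun q => g.1 ≤ q.1 ∧ q.2 ≤ g.2)).card = S.n k := by
      intro g hg
      have hg' : g ∈ (B.Br (S.mIdx χ (k - 1)) : Set (ℝ × ℝ)) := hg
      rw [B.levels (k - 1)] at hg'
      obtain ⟨ρ, hρl, hρv, rfl⟩ := hg'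
      rw [hjeq]
      exact B.count_level hk1 hρl hρv rfl rfl
    rw [hcard1, hcard2, Finset.sum_congr rfl heach1, Finset.sum_congr rfl heach2,
      Finset.sum_const, Finset.sum_const, smul_eq_mul, smul_eq_mul, ← Nat.mul_assoc,
      Nat.mul_comm 2 (B.Br (S.mIdx χ (k - 1))).card, Nat.mul_assoc]
    exact Nat.mul_le_mul_left _ (two_mul_pow_le S χ hχ hk1)

lemma children_sum {j : ℕ} (hj : 1 ≤ j) {p : ℝ × ℝ} (hp : p ∈ B.Br (j - 1)) :
    ∑ q ∈ (B.Br j).filter (fun q => p.1 ≤ q.1 ∧ q.2 ≤ p.2), (q.2 - q.1)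
      ≤ (p.2 - p.1)
        - ((((B.Br j).filter (fun q => p.1 ≤ q.1 ∧ q.2 ≤ p.2)).card : ℝ) - 1)
          * S.alphaLo (S.kOf χ j) := by
  obtain ⟨hk1, hk2, hk3⟩ := kOf_spec S χ hj
  set k := S.kOf χ j with hkdef
  set α := S.alphaLo k with hαdef
  have hα : 0 ≤ α := S.alphaLo_nonneg k hk1
  set C := (B.Br j).filter (fun q => p.1 ≤ q.1 ∧ q.2 ≤ p.2) with hCdef
  -- grandparent
  obtain ⟨g, hg, hpsub⟩ := B.chain' (by omega : S.mIdx χ (k - 1) ≤ j - 1) hp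
  have hg' : g ∈ (B.Br (S.mIdx χ (k - 1)) : Set (ℝ × ℝ)) := hg
  rw [B.levels (k - 1)] at hg'
  obtain ⟨ρ, hρl, hρv, hgeq⟩ := hg'
  have hplt := B.lt (j - 1) p hp
  obtain ⟨hp1, hp2⟩ := (Set.Icc_subset_Icc_iff hplt.le).mp hpsub
  have hpa : S.a ρ ≤ p.1 := by
    rw [hgeq] at hp1
    exact le_trans (S.a_le_aStar ρ) hp1
  have hpb : p.2 ≤ S.b ρ := by
    rw [hgeq] at hp2
    exact le_trans hp2 (S.bStar_le_b ρ)
  -- endpoints of children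
  have hep : ∀ q ∈ C, ∃ σ τ : List ℕ, σ.length = k ∧ τ.length = k ∧
      ValidWord S.n σ ∧ ValidWord S.n τ ∧ q.1 = S.aStar σ ∧ q.2 = S.bStar τ := by
    intro q hq
    have hqBr : q ∈ B.Br j := (Finset.mem_filter.mp hq).1
    rcases Nat.lt_or_ge j (S.mIdx χ k) with hcase | hcase
    · obtain ⟨σ, τ, h1, h2, h3, h4, h5, h6⟩ := B.hull k hk1 j hk2 hcase q hqBr
      exact ⟨σ, τ, h1, h2, h3, h4, h5, h6⟩
    · have hjeq : j = S.mIdx χ k := le_antisymm hk3 hcase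
      have hq' : q ∈ (B.Br (S.mIdx χ k) : Set (ℝ × ℝ)) := by rw [← hjeq]; exact hqBr
      rw [B.levels k] at hq'
      obtain ⟨σ, hσl, hσv, rfl⟩ := hq'
      exact ⟨σ, σ, hσl, hσl, hσv, hσv, rfl, rfl⟩
  -- gap claim
  have hgapcl : ∀ q ∈ C, ∀ q' ∈ C, q.2 ≤ q'.1 → q ≠ q' → α ≤ q'.1 - q.2 := by
    intro q hq q' hq' hord hne
    obtain ⟨hqBr, hq1, hq2⟩ := Finset.mem_filter.mp hq
    obtain ⟨hq'Br, hq'1, hq'2⟩ := Finset.mem_filter.mp hq'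
    have hqlt := B.lt j q hqBr
    have hq'lt := B.lt j q' hq'Br
    obtain ⟨σq, τq, hσql, hτql, hσqv, hτqv, heq1, heq2⟩ := hep q hq
    obtain ⟨σ', τ', hσ'l, hτ'l, hσ'v, hτ'v, heq1', heq2'⟩ := hep q' hq'
    -- identify τq = ρ ++ [l₁]
    obtain ⟨l₁, hl11, hl12, hτeq⟩ := S.extends_of_bStar hρv hτqv (by omega)
      (by linarith : S.a ρ ≤ q.1) (heq2 ▸ hqlt) (by rw [← heq2]; linarith)
    obtain ⟨l₂, hl21, hl22, hσeq⟩ := S.extends_of_aStar hρv hσ'v (by omega)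
      (by rw [← heq1']; linarith) (heq1' ▸ hq'lt) (by linarith : q'.2 ≤ S.b ρ)
    have hαle : S.alphaLo (ρ.length + 1) ≤ S.aStar (ρ ++ [l₂]) - S.bStar (ρ ++ [l₁]) := by
      apply S.gap_ge hρv hl11 hl12 hl21 hl22
      rw [← hτeq, ← hσeq, ← heq2, ← heq1']
      exact hord
    have hidx : ρ.length + 1 = k := by omega
    rw [hidx] at hαle
    rw [heq2, heq1', hτeq, hσeq]
    exact hαle
  -- fattening
  have himinj : Set.InjOn (fun q : ℝ × ℝ => (q.1, q.2 + α)) ↑C := by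
    intro x _ y _ hxy
    simp only [Prod.mk.injEq] at hxy
    exact Prod.ext hxy.1 (by linarith [hxy.2])
  set F := C.image (fun q : ℝ × ℝ => (q.1, q.2 + α)) with hFdef
  have hsumF : ∑ r ∈ F, (r.2 - r.1) = ∑ q ∈ C, ((q.2 + α) - q.1) := by
    rw [hFdef, Finset.sum_image (fun x hx y hy h => himinj hx hy h)]
  have hmain : ∑ r ∈ F, (r.2 - r.1) ≤ (p.2 + α) - p.1 := by
    apply sum_len_le (by linarith)
    · rintro r hr
      obtain ⟨q, hq, rfl⟩ := Finset.mem_image.mp hr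
      have := B.lt j q (Finset.mem_filter.mp hq).1
      simp only
      linarith
    · rintro r hr
      obtain ⟨q, hq, rfl⟩ := Finset.mem_image.mp hr
      obtain ⟨-, e1, e2⟩ := Finset.mem_filter.mp hq
      exact ⟨e1, by simp only; linarith⟩
    · rintro r hr s hs hne
      obtain ⟨q, hq, rfl⟩ := Finset.mem_image.mp hr
      obtain ⟨q', hq', rfl⟩ := Finset.mem_image.mp hs
      have hqne : q ≠ q' := fun h => hne (by rw [h])
      have hqBr := (Finset.mem_filter.mp hq).1
      have hq'Br := (Finset.mem_filter.mp hq').1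
      rcases B.ordered_of_ne hqBr hq'Br hqne with h | h
      · have := hgapcl q hq q' hq' h hqne
        apply Set.eq_empty_iff_forall_notMem.mpr
        rintro x ⟨⟨-, x2⟩, ⟨x3, -⟩⟩
        simp only at x2 x3
        linarith
      · have := hgapcl q' hq' q hq h hqne.symm
        apply Set.eq_empty_iff_forall_notMem.mpr
        rintro x ⟨⟨x1, -⟩, ⟨-, x4⟩⟩
        simp only at x1 x4
        linarith
  rw [hsumF] at hmain
  have hexp : ∑ q ∈ C, ((q.2 + α) - q.1) = (∑ q ∈ C, (q.2 - q.1)) + (C.card : ℝ) * α := by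
    calc ∑ q ∈ C, ((q.2 + α) - q.1) = ∑ q ∈ C, ((q.2 - q.1) + α) :=
        Finset.sum_congr rfl (fun q _ => by ring)
      _ = (∑ q ∈ C, (q.2 - q.1)) + (C.card : ℝ) * α := by
        rw [Finset.sum_add_distrib, Finset.sum_const, nsmul_eq_mul]
  rw [hexp] at hmain
  have : (C.card : ℝ) * α - α = ((C.card : ℝ) - 1) * α := by ring
  linarith

end BranchSeq


namespace BranchSeq

variable {S : HPS} {χ : ℝ} (B : BranchSeq S χ)

lemma len_nonneg (m : ℕ) : 0 ≤ B.len m :=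
  Finset.sum_nonneg (fun p hp => by linarith [B.lt m p hp])

lemma len_pos (m : ℕ) : 0 < B.len m :=
  Finset.sum_pos (fun p hp => by linarith [B.lt m p hp]) (B.nonempty m)

lemma gam_nonneg {j : ℕ} (hj : 1 ≤ j) : 0 ≤ B.gam j :=
  div_nonneg (S.alphaLo_nonneg _ (kOf_spec S χ hj).1) (B.maxLen_pos (j - 1)).le

lemma key (hχ : 1 ≤ χ) {j : ℕ} (hj : 1 ≤ j) :
    B.len j ≤ (1 - B.gam j) * B.len (j - 1) := by
  obtain ⟨hk1, hk2, hk3⟩ := kOf_spec S χ hj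
  have hα : 0 ≤ S.alphaLo (S.kOf χ j) := S.alphaLo_nonneg _ hk1
  set α := S.alphaLo (S.kOf χ j) with hαdef
  have hml : 0 < B.maxLen (j - 1) := B.maxLen_pos (j - 1)
  have hγ0 : 0 ≤ B.gam j := div_nonneg hα hml.le
  have hγml : B.gam j * B.maxLen (j - 1) = α := div_mul_cancel₀ _ (ne_of_gt hml)
  have h2 : B.len j ≤ ∑ p ∈ B.Br (j - 1), ((p.2 - p.1)
      - ((((B.Br j).filter (fun q => p.1 ≤ q.1 ∧ q.2 ≤ p.2)).card : ℝ) - 1) * α) := by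
    have h1 : B.len j = ∑ p ∈ B.Br (j - 1),
        ∑ q ∈ (B.Br j).filter (fun q => p.1 ≤ q.1 ∧ q.2 ≤ p.2), (q.2 - q.1) := by
      simp only [BranchSeq.len]
      exact B.sum_partition (by omega) _
    rw [h1]
    exact Finset.sum_le_sum (fun p hp => B.children_sum hj hp)
  have h3 : ∑ p ∈ B.Br (j - 1),
      ((((B.Br j).filter (fun q => p.1 ≤ q.1 ∧ q.2 ≤ p.2)).card : ℝ))
      = ((B.Br j).card : ℝ) := by
    have e : (B.Br j).card = ∑ p ∈ B.Br (j - 1),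
        ((B.Br j).filter (fun q => p.1 ≤ q.1 ∧ q.2 ≤ p.2)).card := by
      rw [Finset.card_eq_sum_ones, B.sum_partition (by omega : j - 1 ≤ j)]
      exact Finset.sum_congr rfl (fun p _ => (Finset.card_eq_sum_ones _).symm)
    rw [e]
    push_cast
    rfl
  have h4 : B.len j ≤ B.len (j - 1)
      - (((B.Br j).card : ℝ) - ((B.Br (j - 1)).card : ℝ)) * α := by
    have e : ∑ p ∈ B.Br (j - 1), ((p.2 - p.1)
        - ((((B.Br j).filter (fun q => p.1 ≤ q.1 ∧ q.2 ≤ p.2)).card : ℝ) - 1) * α)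
        = B.len (j - 1) - (((B.Br j).card : ℝ) - ((B.Br (j - 1)).card : ℝ)) * α := by
      rw [Finset.sum_sub_distrib]
      congr 1
      rw [← Finset.sum_mul, Finset.sum_sub_distrib, h3, Finset.sum_const, nsmul_eq_mul,
        mul_one]
    rw [e] at h2
    exact h2
  have hcard := B.card_two_le hχ hj
  have h5 : ((B.Br (j - 1)).card : ℝ) ≤ ((B.Br j).card : ℝ) - ((B.Br (j - 1)).card : ℝ) := by
    have : (2 : ℝ) * ((B.Br (j - 1)).card : ℝ) ≤ ((B.Br j).card : ℝ) := by
      exact_mod_cast hcard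
    linarith
  have h6 : B.gam j * B.len (j - 1) ≤ ((B.Br (j - 1)).card : ℝ) * α := by
    have e : B.gam j * B.len (j - 1) = ∑ p ∈ B.Br (j - 1), B.gam j * (p.2 - p.1) := by
      rw [← Finset.mul_sum]; rfl
    rw [e]
    calc ∑ p ∈ B.Br (j - 1), B.gam j * (p.2 - p.1)
        ≤ ∑ p ∈ B.Br (j - 1), α := by
          apply Finset.sum_le_sum
          intro p hp
          calc B.gam j * (p.2 - p.1) ≤ B.gam j * B.maxLen (j - 1) :=
                mul_le_mul_of_nonneg_left (B.le_maxLen hp) hγ0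
            _ = α := hγml
      _ = ((B.Br (j - 1)).card : ℝ) * α := by rw [Finset.sum_const, nsmul_eq_mul]
  have h7 : ((B.Br (j - 1)).card : ℝ) * α
      ≤ (((B.Br j).card : ℝ) - ((B.Br (j - 1)).card : ℝ)) * α :=
    mul_le_mul_of_nonneg_right h5 hα
  have : (1 - B.gam j) * B.len (j - 1) = B.len (j - 1) - B.gam j * B.len (j - 1) := by ring
  linarith

open Classical in
lemma len_le_pow (hχ : 1 ≤ χ) {ε : ℝ} (hε0 : 0 < ε) (hε1 : ε < 1) (m : ℕ) :
    B.len m ≤ B.len 0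
      * (1 - ε) ^ (((Finset.Icc 1 m).filter (fun j => ¬ B.gam j ≤ ε)).card) := by
  induction m with
  | zero => simp
  | succ m ih =>
    have hkey := B.key hχ (Nat.le_add_left 1 m)
    have hm1 : m + 1 - 1 = m := by omega
    rw [hm1] at hkey
    have hγ0 : 0 ≤ B.gam (m + 1) := B.gam_nonneg (Nat.le_add_left 1 m)
    have hlen0 : 0 ≤ B.len m := B.len_nonneg m
    have hins : Finset.Icc 1 (m + 1) = insert (m + 1) (Finset.Icc 1 m) := by
      ext x
      simp only [Finset.mem_Icc, Finset.mem_insert]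
      omega
    have hnotmem : m + 1 ∉ Finset.Icc 1 m := by simp
    rw [hins, Finset.filter_insert]
    by_cases hc : ¬ B.gam (m + 1) ≤ ε
    · rw [if_pos hc, Finset.card_insert_of_notMem (fun h => hnotmem (Finset.mem_filter.mp h).1)]
      have step : B.len (m + 1) ≤ (1 - ε) * B.len m := by
        have : (1 - B.gam (m + 1)) * B.len m ≤ (1 - ε) * B.len m := by
          apply mul_le_mul_of_nonneg_right _ hlen0
          push_neg at hc
          linarith
        linarith
      calc B.len (m + 1) ≤ (1 - ε) * B.len m := step
        _ ≤ (1 - ε) * (B.len 0 * (1 - ε) ^ (((Finset.Icc 1 m).filter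
              (fun j => ¬ B.gam j ≤ ε)).card)) :=
            mul_le_mul_of_nonneg_left ih (by linarith)
        _ = B.len 0 * (1 - ε) ^ (((Finset.Icc 1 m).filter
              (fun j => ¬ B.gam j ≤ ε)).card + 1) := by
            rw [pow_succ]; ring
    · rw [if_neg hc]
      have step : B.len (m + 1) ≤ B.len m := by nlinarith
      exact le_trans step ih

end BranchSeq


namespace BranchSeq

variable {S : HPS} {χ : ℝ} (B : BranchSeq S χ)

open Classical in
lemma Sfin_card_add (ε : ℝ) (m : ℕ) :
    (B.Sfin ε m).card + ((Finset.Icc 1 m).filter (fun j => ¬ B.gam j ≤ ε)).card = m := by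
  rw [BranchSeq.Sfin, Finset.card_filter_add_card_filter_not, Nat.card_Icc]
  omega

open Classical in
lemma final_aux (hχ : 1 ≤ χ) {ε : ℝ} (hε0 : 0 < ε) (hε1 : ε < 1) (a : ℕ → ℕ)
    (hak : ∀ k, k - 1 ≤ a k)
    (hlim : Filter.Tendsto (fun k => (B.len (a k)) ^ (1 / ((a k : ℕ) : ℝ)))
      Filter.atTop (nhds 1)) :
    Filter.Tendsto (fun k => ((B.Sfin ε (a k)).card : ℝ) / ((a k : ℕ) : ℝ))
      Filter.atTop (nhds 1) := by
  have haT : Filter.Tendsto (fun k => ((a k : ℕ) : ℝ)) Filter.atTop Filter.atTop := by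
    apply tendsto_natCast_atTop_atTop.comp
    exact Filter.tendsto_atTop_mono hak (Filter.tendsto_sub_atTop_nat 1)
  have hainv : Filter.Tendsto (fun k => 1 / ((a k : ℕ) : ℝ)) Filter.atTop (nhds 0) :=
    tendsto_const_nhds.div_atTop haT
  have hL0 : 0 < B.len 0 := B.len_pos 0
  have hev1 : ∀ᶠ k in Filter.atTop, 1 ≤ a k :=
    Filter.eventually_atTop.mpr ⟨2, fun k hk => by have := hak k; omega⟩
  -- L0 ^ (1/a k) → 1
  have hL0T : Filter.Tendsto (fun k => (B.len 0) ^ (1 / ((a k : ℕ) : ℝ)))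
      Filter.atTop (nhds 1) := by
    have heq : ∀ k, (B.len 0) ^ (1 / ((a k : ℕ) : ℝ))
        = Real.exp (Real.log (B.len 0) * (1 / ((a k : ℕ) : ℝ))) := fun k =>
      Real.rpow_def_of_pos hL0 _
    have hmul : Filter.Tendsto (fun k => Real.log (B.len 0) * (1 / ((a k : ℕ) : ℝ)))
        Filter.atTop (nhds 0) := by
      simpa using hainv.const_mul (Real.log (B.len 0))
    have := (Real.continuous_exp.tendsto 0).comp hmul
    rw [Real.exp_zero] at this
    exact Filter.Tendsto.congr (fun k => (heq k).symm) this
  set q : ℕ → ℕ := fun k => ((Finset.Icc 1 (a k)).filter (fun j => ¬ B.gam j ≤ ε)).card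
    with hqdef
  set u : ℕ → ℝ := fun k => (1 - ε) ^ (((q k : ℕ) : ℝ) / ((a k : ℕ) : ℝ)) with hudef
  have hεn : (0:ℝ) < 1 - ε := by linarith
  -- upper bound
  have hub : ∀ k, u k ≤ 1 := fun k =>
    Real.rpow_le_one hεn.le (by linarith) (div_nonneg (Nat.cast_nonneg _) (Nat.cast_nonneg _))
  -- lower bound eventually
  have hlb : ∀ᶠ k in Filter.atTop,
      (B.len (a k)) ^ (1 / ((a k : ℕ) : ℝ)) * ((B.len 0) ^ (1 / ((a k : ℕ) : ℝ)))⁻¹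
        ≤ u k := by
    filter_upwards [hev1] with k hk1
    have hA : (0:ℝ) < ((a k : ℕ) : ℝ) := by
      have : (1:ℝ) ≤ ((a k : ℕ) : ℝ) := by exact_mod_cast hk1
      linarith
    have hineq := B.len_le_pow hχ hε0 hε1 (a k)
    have hz : (0:ℝ) ≤ 1 / ((a k : ℕ) : ℝ) := by positivity
    have h1 : (B.len (a k)) ^ (1 / ((a k : ℕ) : ℝ))
        ≤ (B.len 0 * (1 - ε) ^ (q k)) ^ (1 / ((a k : ℕ) : ℝ)) :=
      Real.rpow_le_rpow (B.len_nonneg _) hineq hz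
    have h2 : (B.len 0 * (1 - ε) ^ (q k)) ^ (1 / ((a k : ℕ) : ℝ))
        = (B.len 0) ^ (1 / ((a k : ℕ) : ℝ)) * ((1 - ε) ^ (q k) : ℝ) ^ (1 / ((a k : ℕ) : ℝ)) :=
      Real.mul_rpow hL0.le (pow_nonneg hεn.le _)
    have h3 : ((1 - ε) ^ (q k) : ℝ) ^ (1 / ((a k : ℕ) : ℝ)) = u k := by
      rw [← Real.rpow_natCast (1 - ε) (q k), ← Real.rpow_mul hεn.le]
      rw [hudef]
      simp only []
      congr 1
      rw [mul_one_div]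
    have hpos : (0:ℝ) < (B.len 0) ^ (1 / ((a k : ℕ) : ℝ)) := Real.rpow_pos_of_pos hL0 _
    rw [h2, h3] at h1
    rw [mul_inv_le_iff₀ hpos]
    calc (B.len (a k)) ^ (1 / ((a k : ℕ) : ℝ))
        ≤ (B.len 0) ^ (1 / ((a k : ℕ) : ℝ)) * u k := h1
      _ = u k * (B.len 0) ^ (1 / ((a k : ℕ) : ℝ)) := mul_comm _ _
  -- squeeze
  have hvT : Filter.Tendsto
      (fun k => (B.len (a k)) ^ (1 / ((a k : ℕ) : ℝ)) * ((B.len 0) ^ (1 / ((a k : ℕ) : ℝ)))⁻¹)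
      Filter.atTop (nhds 1) := by
    have := hlim.mul (hL0T.inv₀ one_ne_zero)
    simpa using this
  have huT : Filter.Tendsto u Filter.atTop (nhds 1) :=
    tendsto_of_tendsto_of_tendsto_of_le_of_le' hvT tendsto_const_nhds hlb
      (Filter.Eventually.of_forall hub)
  -- take logs
  have hlogu : ∀ k, Real.log (u k) = (((q k : ℕ) : ℝ) / ((a k : ℕ) : ℝ)) * Real.log (1 - ε) :=
    fun k => Real.log_rpow hεn _
  have hlogT : Filter.Tendsto (fun k => Real.log (u k)) Filter.atTop (nhds 0) := by
    have := (Real.continuousAt_log one_ne_zero).tendsto.comp huT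
    rwa [Real.log_one] at this
  have hlogε : Real.log (1 - ε) < 0 := Real.log_neg hεn (by linarith)
  have hratioT : Filter.Tendsto (fun k => ((q k : ℕ) : ℝ) / ((a k : ℕ) : ℝ))
      Filter.atTop (nhds 0) := by
    have heq : ∀ k, ((q k : ℕ) : ℝ) / ((a k : ℕ) : ℝ)
        = Real.log (u k) / Real.log (1 - ε) := fun k => by
      rw [hlogu k, mul_div_assoc, div_self (ne_of_lt hlogε), mul_one]
    have := hlogT.div_const (Real.log (1 - ε))
    rw [zero_div] at this
    exact Filter.Tendsto.congr (fun k => (heq k).symm) this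
  -- conclude
  have hfin : Filter.Tendsto (fun k => 1 - ((q k : ℕ) : ℝ) / ((a k : ℕ) : ℝ))
      Filter.atTop (nhds 1) := by
    have := (tendsto_const_nhds : Filter.Tendsto (fun _ : ℕ => (1:ℝ)) Filter.atTop
      (nhds 1)).sub hratioT
    simpa using this
  refine Filter.Tendsto.congr' ?_ hfin
  filter_upwards [hev1] with k hk1
  have hA : ((a k : ℕ) : ℝ) ≠ 0 := by
    have : (1:ℝ) ≤ ((a k : ℕ) : ℝ) := by exact_mod_cast hk1
    linarith
  have hsplit := B.Sfin_card_add ε (a k)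
  have hcast : ((B.Sfin ε (a k)).card : ℝ) + ((q k : ℕ) : ℝ) = ((a k : ℕ) : ℝ) := by
    rw [hqdef]
    exact_mod_cast hsplit
  field_simp
  linarith

end BranchSeq

/-- **Lemma 5.1 (2).** If `{a_k}` is a subsequence of `{m_k - 1}` with
`lim_k (l(H_{a_k}))^{1/a_k} = 1`, then for every `ε ∈ (0,1)`,
`lim_k #S_ε(a_k)/a_k = 1`, where `S_ε(m) = {j : 1 ≤ j ≤ m, γ(j) ≤ ε}`. -/
theorem card_Sfin_ratio_tendsto_one
    (S : HPS) (χ : ℝ) (hχ : 1 ≤ χ) (hgap : GapComparable S χ)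
    (B : BranchSeq S χ)
    (φ : ℕ → ℕ) (hφ : StrictMono φ)
    (hlim : Filter.Tendsto
      (fun k => (B.len (S.mIdx χ (φ k) - 1)) ^ (1 / ((S.mIdx χ (φ k) - 1 : ℕ) : ℝ)))
      Filter.atTop (nhds 1))
    (ε : ℝ) (hε : ε ∈ Set.Ioo (0 : ℝ) 1) :
    Filter.Tendsto
      (fun k => ((B.Sfin ε (S.mIdx χ (φ k) - 1)).card : ℝ) / ((S.mIdx χ (φ k) - 1 : ℕ) : ℝ))
      Filter.atTop (nhds 1) := by
  obtain ⟨hε0, hε1⟩ := hε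
  refine B.final_aux hχ hε0 hε1 (fun k => S.mIdx χ (φ k) - 1) (fun k => ?_) hlim
  show k - 1 ≤ S.mIdx χ (φ k) - 1
  have h1 : k ≤ φ k := hφ.le_apply
  have h2 : φ k ≤ S.mIdx χ (φ k) := le_mIdx S χ (φ k)
  omega
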